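/- Let β_L > β_R > 0. Then lim_{E→∞} (1/E)·ln((2e^{(β_L + β_R)E} − e^{β_L E} − e^{β_R E})/(e^{β_L E} + e^{β_R E} − 2)) = β_R. Consequently the detailed balance effective temperature T̂_{N,0}^{(β_L,β_R)}(E) = E/ln(A(E)) of a detector at rest in the NESS converges to 1/β_R = 1/min(β_L, β_R) as E → ∞. -/

import Mathlib

/-!
Dividing numerator and denominator of `A(E)` by `e^{(βL+βR)E}` resp. `e^{βL E}` gives
`A(E) = e^{βR E} Q(E)` with `Q(E) → 2`, since every other exponential decays when `βL > βR > 0`.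
Hence `log A(E) / E = βR + log Q(E) / E → βR`, and the temperature limit is its reciprocal.
-/

open Real Filter Topology

/-- The ratio `A(E)` of the detailed balance condition, for inverse temperatures `βL`, `βR`. -/
noncomputable def detailedBalanceRatio (βL βR E : ℝ) : ℝ :=
  (2 * exp ((βL + βR) * E) - exp (βL * E) - exp (βR * E)) / (exp (βL * E) + exp (βR * E) - 2)

lemma tendsto_exp_mul_atTop_nhds_zero {c : ℝ} (hc : c < 0) :
    Tendsto (fun E : ℝ => exp (c * E)) atTop (𝓝 0) :=
  tendsto_exp_atBot.comp (tendsto_id.const_mul_atTop_of_neg hc)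

lemma tendsto_one_div_mul_log_exp_mul {Q : ℝ → ℝ} {q : ℝ} (hQ : Tendsto Q atTop (𝓝 q))
    (hq : q ≠ 0) (b : ℝ) :
    Tendsto (fun E => 1 / E * log (exp (b * E) * Q E)) atTop (𝓝 b) := by
  have hlog : Tendsto (fun E => log (Q E) * E⁻¹) atTop (𝓝 0) := by
    simpa using ((continuousAt_log hq).tendsto.comp hQ).mul tendsto_inv_atTop_zero
  have hlim : Tendsto (fun E => b + log (Q E) * E⁻¹) atTop (𝓝 b) := by
    simpa using hlog.const_add b
  refine hlim.congr' ?_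
  filter_upwards [eventually_gt_atTop 0, hQ.eventually_ne hq] with E hE hQE
  rw [log_mul (exp_ne_zero _) hQE, log_exp]
  field_simp

lemma detailedBalanceRatio_eq_exp_mul (βL βR E : ℝ) :
    detailedBalanceRatio βL βR E = exp (βR * E) *
      ((2 - exp (-βR * E) - exp (-βL * E)) / (1 + exp ((βR - βL) * E) - 2 * exp (-βL * E))) := by
  rw [detailedBalanceRatio, neg_mul, neg_mul, exp_neg, exp_neg, sub_mul, exp_sub, add_mul, exp_add]
  field_simp

lemma tendsto_one_div_mul_log_detailedBalanceRatio {βL βR : ℝ} (hR : 0 < βR) (h : βR < βL) :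
    Tendsto (fun E => 1 / E * log (detailedBalanceRatio βL βR E)) atTop (𝓝 βR) := by
  have hR' := tendsto_exp_mul_atTop_nhds_zero (neg_lt_zero.mpr hR)
  have hL' := tendsto_exp_mul_atTop_nhds_zero (neg_lt_zero.mpr (hR.trans h))
  have hRL := tendsto_exp_mul_atTop_nhds_zero (sub_neg.mpr h)
  have hQ := (((tendsto_const_nhds (x := (2 : ℝ))).sub hR').sub hL').div
    (((tendsto_const_nhds (x := (1 : ℝ))).add hRL).sub (hL'.const_mul 2)) (by norm_num)
  simp only [detailedBalanceRatio_eq_exp_mul]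
  exact tendsto_one_div_mul_log_exp_mul hQ (by norm_num) βR

/-- For `β_L > β_R > 0`,
`lim_{E→∞} (1/E)·ln((2e^{(β_L+β_R)E} − e^{β_L E} − e^{β_R E})/(e^{β_L E} + e^{β_R E} − 2))
  = β_R`, and consequently the detailed balance effective temperature
`T̂_{N,0}^{(β_L,β_R)}(E) = E/ln(A(E))` converges to `1/β_R = 1/min(β_L, β_R)` as `E → ∞`. -/
theorem stmt16 (βL βR : ℝ) (hR : 0 < βR) (h : βR < βL) :
    Tendsto (fun E : ℝ => (1 / E) * Real.log
        ((2 * Real.exp ((βL + βR) * E) - Real.exp (βL * E) - Real.exp (βR * E)) /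
          (Real.exp (βL * E) + Real.exp (βR * E) - 2)))
      atTop (nhds βR) ∧
    Tendsto (fun E : ℝ => E / Real.log
        ((2 * Real.exp ((βL + βR) * E) - Real.exp (βL * E) - Real.exp (βR * E)) /
          (Real.exp (βL * E) + Real.exp (βR * E) - 2)))
      atTop (nhds (1 / min βL βR)) := by
  have hlim := tendsto_one_div_mul_log_detailedBalanceRatio hR h
  refine ⟨hlim, ?_⟩
  rw [min_eq_right h.le, one_div]
  refine (hlim.inv₀ hR.ne').congr fun E => ?_
  rw [detailedBalanceRatio, one_div_mul_eq_div, inv_div]
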